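/- arXiv:2011.04543 — 3 statements merged into one kernel-verified Lean document; each statement's English description precedes it below -/
import Mathlib

section
/- With pseudodifferential operators over a commutative differential ring (A, D) as above, for single-term operators S = s∂^m with m ≥ 0 and T = t∂^n with n < 0, the residue of the commutator [S,T] = ST − TS lies in the image of the derivation D; explicitly, res([S,T]) = C(m, m+n+1) · D( Σ_{α=0}^{m+n} (-1)^α D^α(s) D^(m+n-α)(t) ) when m+n ≥ 0 and is 0 otherwise. -/
open scoped BigOperators

namespace Paper

variable {A : Type*} [CommRing A]

/-- Generalized binomial coefficient `C(k,i) = k(k-1)⋯(k-i+1)/i!` for `k : ℤ`. -/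
noncomputable def gbinom (k : ℤ) (i : ℕ) : ℤ :=
  (∏ j ∈ Finset.range i, (k - (j : ℤ))) / (i.factorial : ℤ)

/-- Multiplication of pseudodifferential operators, given by their coefficient
functions `ℤ → A`, with `∂^k f = Σ_{l≥0} C(k,l) D^l(f) ∂^(k-l)`. -/
noncomputable def pmul (D : A → A) (X Y : ℤ → A) : ℤ → A :=
  fun k => ∑ᶠ i : ℤ, ∑ᶠ l : ℕ, X i * (gbinom i l • D^[l] (Y (k + (l : ℤ) - i)))

/-- The residue: the coefficient of `∂⁻¹`. -/
def res (X : ℤ → A) : A := X (-1)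

/-- The nonnegative-order (differential-operator) part. -/
def pplus (X : ℤ → A) : ℤ → A := fun i => if 0 ≤ i then X i else 0

/-- The strictly negative-order part. -/
def pminus (X : ℤ → A) : ℤ → A := fun i => if i < 0 then X i else 0

/-- Boundedness of the order: coefficients vanish above some `M`. -/
def Bdd (X : ℤ → A) : Prop := ∃ M : ℤ, ∀ i : ℤ, M < i → X i = 0

/-- Commutator of pseudodifferential operators. -/
noncomputable def pcomm (D : A → A) (X Y : ℤ → A) : ℤ → A :=
  pmul D X Y - pmul D Y X

/-- The identity operator. -/
def pone : ℤ → A := fun i => if i = 0 then 1 else 0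

/-- The single-term operator `s ∂^m`. -/
def psingle (m : ℤ) (s : A) : ℤ → A := fun i => if i = m then s else 0

/-- Powers of a pseudodifferential operator. -/
noncomputable def ppow (D : A → A) (X : ℤ → A) : ℕ → ℤ → A
  | 0 => pone
  | n + 1 => pmul D X (ppow D X n)

/-- `D` is a derivation: additive and Leibniz. -/
def IsDeriv (D : A → A) : Prop :=
  (∀ a b : A, D (a + b) = D a + D b) ∧ ∀ a b : A, D (a * b) = D a * b + a * D b

/-- Nonnegative part of `L^n`. -/
noncomputable def Lplus (D : A → A) (L : ℤ → A) (n : ℕ) : ℤ → A := pplus (ppow D L n)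

/-- Strictly negative part of `L^n`. -/
noncomputable def Lminus (D : A → A) (L : ℤ → A) (n : ℕ) : ℤ → A := pminus (ppow D L n)

/-! Exactly one term of each of `s∂^m · t∂^n` and `t∂^n · s∂^m` reaches order `-1`, the one
with `p + 1 = m + n + 1` derivatives, so `res [S,T] = C(m,p+1) s D^(p+1) t - C(n,p+1) t D^(p+1) s`.
As `n = p - m`, the reflection `C(p - m, p + 1) = (-1)^(p+1) C(m, p + 1)` gives both terms the
coefficient `C(m, p + 1)`, and `s D^(p+1) t - (-1)^(p+1) D^(p+1) s · t` is, by the Leibniz rule,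
the telescoping derivative of `Σ_α (-1)^α D^α s · D^(p-α) t`. -/

section

variable {D : A → A}

theorem gbinom_eq_choose (k : ℤ) (i : ℕ) : gbinom k i = Ring.choose k i := by
  have h := Ring.descPochhammer_eq_factorial_smul_choose k i
  rw [← Polynomial.eval_eq_smeval, descPochhammer_eval_eq_prod_range, nsmul_eq_mul] at h
  rw [gbinom, h, Int.mul_ediv_cancel_left _ (by positivity)]

theorem gbinom_succ_of_add_eq {m n : ℤ} {p : ℕ} (h : m + n = p) :
    gbinom n (p + 1) = (-1) ^ (p + 1) * gbinom m (p + 1) := by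
  rw [gbinom_eq_choose, gbinom_eq_choose, show n = -(m - p) by omega, Ring.choose_neg,
    Units.smul_def, Int.coe_negOnePow_natCast, smul_eq_mul]
  congr 2
  push_cast
  ring

theorem IsDeriv.map_zero (hD : IsDeriv D) : D 0 = 0 :=
  (AddMonoidHom.mk' D hD.1).map_zero

theorem IsDeriv.map_zsmul (hD : IsDeriv D) (z : ℤ) (a : A) : D (z • a) = z • D a :=
  (AddMonoidHom.mk' D hD.1).map_zsmul z a

theorem IsDeriv.map_sum (hD : IsDeriv D) {ι : Type*} (f : ι → A) (S : Finset ι) :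
    D (∑ i ∈ S, f i) = ∑ i ∈ S, D (f i) :=
  _root_.map_sum (AddMonoidHom.mk' D hD.1) f S

theorem IsDeriv.map_neg_one_pow_mul (hD : IsDeriv D) (k : ℕ) (a : A) :
    D ((-1) ^ k * a) = (-1) ^ k * D a := by
  simpa [zsmul_eq_mul] using hD.map_zsmul ((-1) ^ k) a

theorem IsDeriv.map_sum_alternating (hD : IsDeriv D) (s t : A) (p : ℕ) :
    D (∑ α ∈ Finset.range (p + 1), (-1 : A) ^ α * (D^[α] s * D^[p - α] t)) =
      s * D^[p + 1] t - (-1 : A) ^ (p + 1) * (D^[p + 1] s * t) := by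
  let g : ℕ → A := fun α => (-1 : A) ^ α * (D^[α] s * D^[p + 1 - α] t)
  have hstep : ∀ α ∈ Finset.range (p + 1),
      D ((-1 : A) ^ α * (D^[α] s * D^[p - α] t)) = g α - g (α + 1) := by
    intro α hα
    have hsucc : p + 1 - α = p - α + 1 := by rw [Finset.mem_range] at hα; omega
    simp only [g, hD.map_neg_one_pow_mul, hD.2, hsucc, Nat.reduceSubDiff,
      Function.iterate_succ_apply']
    ring
  rw [hD.map_sum, Finset.sum_congr rfl hstep, Finset.sum_range_sub']
  simp [g]

theorem pmul_psingle_psingle (hD0 : D 0 = 0) (s t : A) (m n k : ℤ) :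
    pmul D (psingle m s) (psingle n t) k =
      if 0 ≤ m + n - k then
        s * (gbinom m (m + n - k).toNat • D^[(m + n - k).toNat] t)
      else 0 := by
  have hY : ∀ l : ℕ, D^[l] (psingle n t (k + l - m)) =
      if (l : ℤ) = m + n - k then D^[l] t else 0 := by
    intro l
    simp only [psingle, show k + l - m = n ↔ (l : ℤ) = m + n - k by omega]
    split_ifs <;> simp [Function.iterate_fixed hD0]
  rw [pmul, finsum_eq_single _ m (fun i hi => by simp [psingle, hi])]
  simp only [hY]
  simp only [psingle, if_true]
  split_ifs with h
  · rw [finsum_eq_single _ (m + n - k).toNat (fun l hl => by rw [if_neg (by omega)]; simp)]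
    simp [show ((m + n - k).toNat : ℤ) = m + n - k by omega]
  · exact finsum_eq_zero_of_forall_eq_zero fun l => by rw [if_neg (by omega)]; simp

theorem res_pcomm_psingle (hD0 : D 0 = 0) (s t : A) (m n : ℤ) :
    res (pcomm D (psingle m s) (psingle n t)) =
      if 0 ≤ m + n + 1 then
        s * (gbinom m (m + n + 1).toNat • D^[(m + n + 1).toNat] t) -
          t * (gbinom n (m + n + 1).toNat • D^[(m + n + 1).toNat] s)
      else 0 := by
  rw [res, pcomm, Pi.sub_apply, pmul_psingle_psingle hD0, pmul_psingle_psingle hD0,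
    show m + n - -1 = m + n + 1 by ring, show n + m - -1 = m + n + 1 by ring]
  split_ifs <;> simp

theorem res_pcomm_psingle_of_add_eq (hD : IsDeriv D) (s t : A) {m n : ℤ} {p : ℕ}
    (h : m + n = p) :
    res (pcomm D (psingle m s) (psingle n t)) =
      gbinom m (p + 1) • D (∑ α ∈ Finset.range (p + 1),
        (-1 : A) ^ α * (D^[α] s * D^[p - α] t)) := by
  rw [res_pcomm_psingle hD.map_zero, if_pos (by omega), show (m + n + 1).toNat = p + 1 by omega,
    gbinom_succ_of_add_eq h, hD.map_sum_alternating]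
  simp only [zsmul_eq_mul]
  push_cast
  ring

theorem res_pcomm_psingle_of_add_neg (hD0 : D 0 = 0) (s t : A) {m n : ℤ} (h : m + n < 0) :
    res (pcomm D (psingle m s) (psingle n t)) = 0 := by
  rw [res_pcomm_psingle hD0]
  split_ifs
  · rw [show (m + n + 1).toNat = 0 by omega]
    simp [gbinom_eq_choose, mul_comm]
  · rfl

end

theorem stmt3_general {A : Type*} [CommRing A] (D : A → A) (hD : IsDeriv D)
    (s t : A) (m n : ℤ) :
    res (pcomm D (psingle m s) (psingle n t)) ∈ Set.range D ∧
    res (pcomm D (psingle m s) (psingle n t)) =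
      if 0 ≤ m + n then
        gbinom m (m + n + 1).toNat •
          D (∑ α ∈ Finset.range ((m + n).toNat + 1),
              (-1 : A) ^ α * (D^[α] s * D^[(m + n).toNat - α] t))
      else 0 := by
  have hres : res (pcomm D (psingle m s) (psingle n t)) =
      if 0 ≤ m + n then
        gbinom m (m + n + 1).toNat •
          D (∑ α ∈ Finset.range ((m + n).toNat + 1),
              (-1 : A) ^ α * (D^[α] s * D^[(m + n).toNat - α] t))
      else 0 := by
    split_ifs with h
    · rw [show (m + n + 1).toNat = (m + n).toNat + 1 by omega]
      exact res_pcomm_psingle_of_add_eq hD s t (Int.toNat_of_nonneg h).symm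
    · exact res_pcomm_psingle_of_add_neg hD.map_zero s t (not_le.mp h)
  refine ⟨?_, hres⟩
  rw [hres]
  split_ifs
  · exact ⟨_, hD.map_zsmul _ _⟩
  · exact ⟨0, hD.map_zero⟩

/-- For single-term operators `S = s∂^m` (`m ≥ 0`) and `T = t∂^n` (`n < 0`),
the residue of the commutator `[S,T]` is a total derivative; explicitly,
`res([S,T]) = C(m, m+n+1)·D(Σ_{α=0}^{m+n} (-1)^α D^α(s) D^(m+n-α)(t))` when
`m + n ≥ 0`, and `0` otherwise. -/
theorem stmt3 {A : Type*} [CommRing A] (D : A → A) (hD : IsDeriv D)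
    (s t : A) (m n : ℤ) (hm : 0 ≤ m) (hn : n < 0) :
    res (pcomm D (psingle m s) (psingle n t)) ∈ Set.range D ∧
    res (pcomm D (psingle m s) (psingle n t)) =
      if 0 ≤ m + n then
        gbinom m (m + n + 1).toNat •
          D (∑ α ∈ Finset.range ((m + n).toNat + 1),
              (-1 : A) ^ α * (D^[α] s * D^[(m + n).toNat - α] t))
      else 0 :=
  stmt3_general D hD s t m n

end Paper
end

section
/- With the splitting R = R_+ ⊕ R_− of the ring of pseudodifferential operators as above (R_+ a subring, P_+(R_−·R_−) = 0), if A, B ∈ R commute, then [A_+, B]_+ − [B_+, A]_+ = [A_+, B_+], where X_+ = P_+(X). -/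
/-!
Write `a₋ = a - a₊` and `b₋ = b - b₊`. Because `a` and `b` commute, expanding `[a₋, b₋]` shows
`[a₊, b] - [b₊, a] = [a₊, b₊] - [a₋, b₋]`. Applying `P₊`, the first bracket is fixed since `R₊` is
a subring, and the second is killed since `P₊ (R₋ R₋) = 0`.
-/

theorem commutator_sub_commutator_eq_of_commute {R : Type*} [Ring R] {a b : R} (hab : Commute a b)
    (p q : R) :
    p * b - b * p - (q * a - a * q)
      = (p * q - q * p) - ((a - p) * (b - q) - (b - q) * (a - p)) := by
  simp only [mul_sub, sub_mul, hab.eq]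
  abel

theorem stmt10_general {R : Type*} [Ring R] (P : R → R)
    (haddP : ∀ x y : R, P (x + y) = P x + P y)
    (hsubring : ∀ x y : R, P (P x * P y) = P x * P y)
    (hminus : ∀ x y : R, P ((x - P x) * (y - P y)) = 0)
    (a b : R) (hab : a * b = b * a) :
    P (P a * b - b * P a) - P (P b * a - a * P b)
      = P a * P b - P b * P a := by
  let π : R →+ R := AddMonoidHom.mk' P haddP
  calc P (P a * b - b * P a) - P (P b * a - a * P b)
      = π (P a * b - b * P a - (P b * a - a * P b)) := (map_sub π _ _).symm
    _ = π (P a * P b) - π (P b * P a)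
          - (π ((a - P a) * (b - P b)) - π ((b - P b) * (a - P a))) := by
      rw [commutator_sub_commutator_eq_of_commute hab]
      simp only [map_sub]
    _ = P a * P b - P b * P a := by
      simp only [π, AddMonoidHom.mk'_apply, hsubring, hminus, sub_zero]

/-- If `A, B` commute then `[A₊, B]₊ − [B₊, A]₊ = [A₊, B₊]`. -/
theorem stmt10 {R : Type*} [Ring R] (P : R → R)
    (haddP : ∀ x y : R, P (x + y) = P x + P y)
    (hidem : ∀ x : R, P (P x) = P x)
    (hsubring : ∀ x y : R, P (P x * P y) = P x * P y)
    (hminus : ∀ x y : R, P ((x - P x) * (y - P y)) = 0)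
    (a b : R) (hab : a * b = b * a) :
    P (P a * b - b * P a) - P (P b * a - a * P b)
      = P a * P b - P b * P a :=
  stmt10_general P haddP hsubring hminus a b hab
end

section
/- Suppose smooth functions u_1, u_2 of variables x, x_2, x_3 satisfy the system: 3·∂_{x_2}u_1 = 3·∂_x²u_1 + 6·∂_x u_2, and 3·∂_{x_2}∂_x u_1 + 3·∂_{x_2}u_2 − 2·∂_{x_3}u_1 = ∂_x³u_1 + 3·∂_x²u_2 − 6·u_1·∂_x u_1. Then u = 2u_1 satisfies the KP equation 3·∂_{x_2}²u = ∂_x(4·∂_{x_3}u − ∂_x³u − 6u·∂_x u). -/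
/-- Partial derivative in the first argument. -/
noncomputable def pd1 (f : ℝ → ℝ → ℝ → ℝ) : ℝ → ℝ → ℝ → ℝ :=
  fun x y z => deriv (fun s => f s y z) x

/-- Partial derivative in the second argument. -/
noncomputable def pd2 (f : ℝ → ℝ → ℝ → ℝ) : ℝ → ℝ → ℝ → ℝ :=
  fun x y z => deriv (fun s => f x s z) y

/-- Partial derivative in the third argument. -/
noncomputable def pd3 (f : ℝ → ℝ → ℝ → ℝ) : ℝ → ℝ → ℝ → ℝ :=
  fun x y z => deriv (fun s => f x y s) z

/-- Directional derivative of a function on `ℝ³`. -/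
noncomputable def Dv (v : ℝ × ℝ × ℝ) (F : ℝ × ℝ × ℝ → ℝ) : ℝ × ℝ × ℝ → ℝ :=
  fun p => fderiv ℝ F p v

lemma Dv_smooth {F : ℝ × ℝ × ℝ → ℝ} (hF : ContDiff ℝ (⊤ : ℕ∞) F) (v : ℝ × ℝ × ℝ) :
    ContDiff ℝ (⊤ : ℕ∞) (Dv v F) :=
  (hF.fderiv_right (by simp)).clm_apply contDiff_const

lemma Dv_diff {F : ℝ × ℝ × ℝ → ℝ} (hF : ContDiff ℝ (⊤ : ℕ∞) F) (v : ℝ × ℝ × ℝ) :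
    Differentiable ℝ (Dv v F) := (Dv_smooth hF v).differentiable (by simp)

lemma Dv_comm {F : ℝ × ℝ × ℝ → ℝ} (hF : ContDiff ℝ (⊤ : ℕ∞) F) (v w : ℝ × ℝ × ℝ) :
    Dv v (Dv w F) = Dv w (Dv v F) := by
  funext p
  have hd : ∀ q, HasFDerivAt F (fderiv ℝ F q) q := fun q =>
    (hF.differentiable (by simp) q).hasFDerivAt
  have hd2 : HasFDerivAt (fderiv ℝ F) (fderiv ℝ (fderiv ℝ F) p) p :=
    (((hF.fderiv_right (m := 1) (by exact WithTop.coe_le_coe.mpr le_top)).differentiable (by simp)) p).hasFDerivAt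
  have key : ∀ a b : ℝ × ℝ × ℝ, Dv a (Dv b F) p = fderiv ℝ (fderiv ℝ F) p a b := by
    intro a b
    have h3 : HasFDerivAt (Dv b F)
        ((ContinuousLinearMap.apply ℝ ℝ b).comp (fderiv ℝ (fderiv ℝ F) p)) p :=
      (ContinuousLinearMap.apply ℝ ℝ b).hasFDerivAt.comp p hd2
    show fderiv ℝ (Dv b F) p a = _
    rw [h3.fderiv]
    rfl
  rw [key, key, second_derivative_symmetric hd hd2 v w]

lemma pd1_eq {f : ℝ → ℝ → ℝ → ℝ} {F : ℝ × ℝ × ℝ → ℝ} (hF : Differentiable ℝ F)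
    (hfF : ∀ x y z, f x y z = F (x, y, z)) (x y z : ℝ) :
    pd1 f x y z = Dv (1, 0, 0) F (x, y, z) := by
  have hc : HasDerivAt (fun s : ℝ => ((s, y, z) : ℝ × ℝ × ℝ)) ((1 : ℝ), (0 : ℝ), (0 : ℝ)) x :=
    (hasDerivAt_id x).prodMk (hasDerivAt_const x (y, z))
  have he : (fun s => f s y z) = fun s => F (s, y, z) := funext fun s => hfF s y z
  show deriv (fun s => f s y z) x = _
  rw [he]
  exact ((hF (x, y, z)).hasFDerivAt.comp_hasDerivAt x hc).deriv

lemma pd2_eq {f : ℝ → ℝ → ℝ → ℝ} {F : ℝ × ℝ × ℝ → ℝ} (hF : Differentiable ℝ F)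
    (hfF : ∀ x y z, f x y z = F (x, y, z)) (x y z : ℝ) :
    pd2 f x y z = Dv (0, 1, 0) F (x, y, z) := by
  have hc : HasDerivAt (fun s : ℝ => ((x, s, z) : ℝ × ℝ × ℝ)) ((0 : ℝ), (1 : ℝ), (0 : ℝ)) y :=
    (hasDerivAt_const y x).prodMk ((hasDerivAt_id y).prodMk (hasDerivAt_const y z))
  have he : (fun s => f x s z) = fun s => F (x, s, z) := funext fun s => hfF x s z
  show deriv (fun s => f x s z) y = _
  rw [he]
  exact ((hF (x, y, z)).hasFDerivAt.comp_hasDerivAt y hc).deriv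

lemma pd3_eq {f : ℝ → ℝ → ℝ → ℝ} {F : ℝ × ℝ × ℝ → ℝ} (hF : Differentiable ℝ F)
    (hfF : ∀ x y z, f x y z = F (x, y, z)) (x y z : ℝ) :
    pd3 f x y z = Dv (0, 0, 1) F (x, y, z) := by
  have hc : HasDerivAt (fun s : ℝ => ((x, y, s) : ℝ × ℝ × ℝ)) ((0 : ℝ), (0 : ℝ), (1 : ℝ)) z :=
    (hasDerivAt_const z x).prodMk ((hasDerivAt_const z y).prodMk (hasDerivAt_id z))
  have he : (fun s => f x y s) = fun s => F (x, y, s) := funext fun s => hfF x y s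
  show deriv (fun s => f x y s) z = _
  rw [he]
  exact ((hF (x, y, z)).hasFDerivAt.comp_hasDerivAt z hc).deriv

lemma Dv_const_mul {F : ℝ × ℝ × ℝ → ℝ} (hF : Differentiable ℝ F) (c : ℝ) (v : ℝ × ℝ × ℝ) :
    Dv v (fun q => c * F q) = fun q => c * Dv v F q := by
  funext p
  have h := (hF p).hasFDerivAt.const_mul c
  show fderiv ℝ _ p v = _
  rw [h.fderiv]
  simp [Dv]

lemma Dv_comb2 {A B : ℝ × ℝ × ℝ → ℝ} (hA : Differentiable ℝ A) (hB : Differentiable ℝ B)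
    (a b : ℝ) (v p : ℝ × ℝ × ℝ) :
    Dv v (fun q => a * A q + b * B q) p = a * Dv v A p + b * Dv v B p := by
  have h : HasFDerivAt (fun q => a * A q + b * B q)
      (a • fderiv ℝ A p + b • fderiv ℝ B p) p :=
    ((hA p).hasFDerivAt.const_mul a).add ((hB p).hasFDerivAt.const_mul b)
  show fderiv ℝ _ p v = _
  rw [h.fderiv]
  simp [Dv]

lemma Dv_comb3 {A B C : ℝ × ℝ × ℝ → ℝ} (hA : Differentiable ℝ A) (hB : Differentiable ℝ B)
    (hC : Differentiable ℝ C) (a b c : ℝ) (v p : ℝ × ℝ × ℝ) :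
    Dv v (fun q => a * A q + b * B q + c * C q) p
      = a * Dv v A p + b * Dv v B p + c * Dv v C p := by
  have h : HasFDerivAt (fun q => a * A q + b * B q + c * C q)
      (a • fderiv ℝ A p + b • fderiv ℝ B p + c • fderiv ℝ C p) p :=
    (((hA p).hasFDerivAt.const_mul a).add ((hB p).hasFDerivAt.const_mul b)).add
      ((hC p).hasFDerivAt.const_mul c)
  show fderiv ℝ _ p v = _
  rw [h.fderiv]
  simp [Dv]

lemma Dv_mul_pt {A B : ℝ × ℝ × ℝ → ℝ} (hA : Differentiable ℝ A) (hB : Differentiable ℝ B)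
    (v p : ℝ × ℝ × ℝ) :
    Dv v (fun q => A q * B q) p = A p * Dv v B p + B p * Dv v A p := by
  have h : HasFDerivAt (fun q => A q * B q) (A p • fderiv ℝ B p + B p • fderiv ℝ A p) p :=
    (hA p).hasFDerivAt.mul (hB p).hasFDerivAt
  show fderiv ℝ _ p v = _
  rw [h.fderiv]
  simp [Dv]

/-- If smooth `u₁, u₂` satisfy the two component equations of the KP
zero-curvature system, then `u = 2u₁` satisfies the KP equation
`3 u_{x₂x₂} = ∂_x (4 u_{x₃} − u_{xxx} − 6 u u_x)`. -/
theorem stmt17 (u1 u2 : ℝ → ℝ → ℝ → ℝ)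
    (hu1 : ContDiff ℝ (⊤ : ℕ∞) (fun p : ℝ × ℝ × ℝ => u1 p.1 p.2.1 p.2.2))
    (hu2 : ContDiff ℝ (⊤ : ℕ∞) (fun p : ℝ × ℝ × ℝ => u2 p.1 p.2.1 p.2.2))
    (h1 : ∀ x y z : ℝ, 3 * pd2 u1 x y z = 3 * pd1 (pd1 u1) x y z + 6 * pd1 u2 x y z)
    (h2 : ∀ x y z : ℝ,
      3 * pd2 (pd1 u1) x y z + 3 * pd2 u2 x y z - 2 * pd3 u1 x y z
        = pd1 (pd1 (pd1 u1)) x y z + 3 * pd1 (pd1 u2) x y z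
          - 6 * u1 x y z * pd1 u1 x y z) :
    ∀ x y z : ℝ,
      3 * pd2 (pd2 (fun a b c => 2 * u1 a b c)) x y z
        = pd1 (fun a b c =>
            4 * pd3 (fun a' b' c' => 2 * u1 a' b' c') a b c
              - pd1 (pd1 (pd1 (fun a' b' c' => 2 * u1 a' b' c'))) a b c
              - 6 * (2 * u1 a b c) * pd1 (fun a' b' c' => 2 * u1 a' b' c') a b c)
            x y z := by
  intro x y z
  set U1 : ℝ × ℝ × ℝ → ℝ := fun p => u1 p.1 p.2.1 p.2.2 with hU1def
  set U2 : ℝ × ℝ × ℝ → ℝ := fun p => u2 p.1 p.2.1 p.2.2 with hU2def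
  set W : ℝ × ℝ × ℝ → ℝ := fun q => 2 * U1 q with hWdef
  have hU1d : Differentiable ℝ U1 := hu1.differentiable (by simp)
  have hU2d : Differentiable ℝ U2 := hu2.differentiable (by simp)
  have hWs : ContDiff ℝ (⊤ : ℕ∞) W := by rw [hWdef]; exact contDiff_const.mul hu1
  have hWd : Differentiable ℝ W := hWs.differentiable (by simp)
  -- conversions for u1
  have c_u1 : ∀ a b c : ℝ, u1 a b c = U1 (a, b, c) := fun _ _ _ => by rw [hU1def]
  have c_u2 : ∀ a b c : ℝ, u2 a b c = U2 (a, b, c) := fun _ _ _ => by rw [hU2def]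
  have c1 : ∀ a b c : ℝ, pd1 u1 a b c = Dv (1,0,0) U1 (a,b,c) := pd1_eq hU1d c_u1
  have c2 : ∀ a b c : ℝ, pd2 u1 a b c = Dv (0,1,0) U1 (a,b,c) := pd2_eq hU1d c_u1
  have c3 : ∀ a b c : ℝ, pd3 u1 a b c = Dv (0,0,1) U1 (a,b,c) := pd3_eq hU1d c_u1
  have c11 : ∀ a b c : ℝ, pd1 (pd1 u1) a b c = Dv (1,0,0) (Dv (1,0,0) U1) (a,b,c) :=
    pd1_eq (Dv_diff hu1 (1,0,0)) c1
  have c111 : ∀ a b c : ℝ,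
      pd1 (pd1 (pd1 u1)) a b c = Dv (1,0,0) (Dv (1,0,0) (Dv (1,0,0) U1)) (a,b,c) :=
    pd1_eq (Dv_diff (Dv_smooth hu1 (1,0,0)) (1,0,0)) c11
  have c21 : ∀ a b c : ℝ, pd2 (pd1 u1) a b c = Dv (0,1,0) (Dv (1,0,0) U1) (a,b,c) :=
    pd2_eq (Dv_diff hu1 (1,0,0)) c1
  have d1 : ∀ a b c : ℝ, pd1 u2 a b c = Dv (1,0,0) U2 (a,b,c) := pd1_eq hU2d c_u2
  have d2 : ∀ a b c : ℝ, pd2 u2 a b c = Dv (0,1,0) U2 (a,b,c) := pd2_eq hU2d c_u2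
  have d11 : ∀ a b c : ℝ, pd1 (pd1 u2) a b c = Dv (1,0,0) (Dv (1,0,0) U2) (a,b,c) :=
    pd1_eq (Dv_diff hu2 (1,0,0)) d1
  -- conversions for W = 2 u1
  have c_w : ∀ a b c : ℝ, (2 : ℝ) * u1 a b c = W (a, b, c) := fun a b c => by
    rw [hWdef, hU1def]
  have w1 : ∀ a b c : ℝ, pd1 (fun a b c => 2 * u1 a b c) a b c = Dv (1,0,0) W (a,b,c) :=
    pd1_eq hWd c_w
  have w2 : ∀ a b c : ℝ, pd2 (fun a b c => 2 * u1 a b c) a b c = Dv (0,1,0) W (a,b,c) :=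
    pd2_eq hWd c_w
  have w3 : ∀ a b c : ℝ, pd3 (fun a b c => 2 * u1 a b c) a b c = Dv (0,0,1) W (a,b,c) :=
    pd3_eq hWd c_w
  have w11 : ∀ a b c : ℝ,
      pd1 (pd1 (fun a b c => 2 * u1 a b c)) a b c = Dv (1,0,0) (Dv (1,0,0) W) (a,b,c) :=
    pd1_eq (Dv_diff hWs (1,0,0)) w1
  have w111 : ∀ a b c : ℝ,
      pd1 (pd1 (pd1 (fun a b c => 2 * u1 a b c))) a b c
        = Dv (1,0,0) (Dv (1,0,0) (Dv (1,0,0) W)) (a,b,c) :=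
    pd1_eq (Dv_diff (Dv_smooth hWs (1,0,0)) (1,0,0)) w11
  have w22 : ∀ a b c : ℝ,
      pd2 (pd2 (fun a b c => 2 * u1 a b c)) a b c = Dv (0,1,0) (Dv (0,1,0) W) (a,b,c) :=
    pd2_eq (Dv_diff hWs (0,1,0)) w2
  -- function-level consequences of h1
  have hfun1 : Dv (1,0,0) U2
      = fun q => (1/2) * Dv (0,1,0) U1 q + (-(1/2)) * Dv (1,0,0) (Dv (1,0,0) U1) q := by
    funext q
    obtain ⟨a, b, c⟩ := q
    have h := h1 a b c
    rw [c2, c11, d1] at h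
    show Dv (1,0,0) U2 (a,b,c) = _
    linarith
  have k1 : Dv (1,0,0) (Dv (1,0,0) U2)
      = fun q => (1/2) * Dv (1,0,0) (Dv (0,1,0) U1) q
          + (-(1/2)) * Dv (1,0,0) (Dv (1,0,0) (Dv (1,0,0) U1)) q := by
    funext p
    rw [hfun1]
    exact Dv_comb2 (Dv_diff hu1 (0,1,0)) (Dv_diff (Dv_smooth hu1 (1,0,0)) (1,0,0)) _ _ _ _
  have k2 : Dv (1,0,0) (Dv (1,0,0) (Dv (1,0,0) U2)) (x,y,z)
      = (1/2) * Dv (1,0,0) (Dv (1,0,0) (Dv (0,1,0) U1)) (x,y,z)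
          + (-(1/2)) * Dv (1,0,0) (Dv (1,0,0) (Dv (1,0,0) (Dv (1,0,0) U1))) (x,y,z) := by
    rw [k1]
    exact Dv_comb2 (Dv_diff (Dv_smooth hu1 (0,1,0)) (1,0,0))
      (Dv_diff (Dv_smooth (Dv_smooth hu1 (1,0,0)) (1,0,0)) (1,0,0)) _ _ _ _
  have k3 : Dv (0,1,0) (Dv (1,0,0) U2) (x,y,z)
      = (1/2) * Dv (0,1,0) (Dv (0,1,0) U1) (x,y,z)
          + (-(1/2)) * Dv (0,1,0) (Dv (1,0,0) (Dv (1,0,0) U1)) (x,y,z) := by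
    rw [hfun1]
    exact Dv_comb2 (Dv_diff hu1 (0,1,0)) (Dv_diff (Dv_smooth hu1 (1,0,0)) (1,0,0)) _ _ _ _
  -- function-level consequence of h2
  have hfun2 : (fun q => 3 * Dv (0,1,0) (Dv (1,0,0) U1) q + 3 * Dv (0,1,0) U2 q
        + (-2) * Dv (0,0,1) U1 q)
      = (fun q => 1 * Dv (1,0,0) (Dv (1,0,0) (Dv (1,0,0) U1)) q
          + 3 * Dv (1,0,0) (Dv (1,0,0) U2) q + (-6) * (U1 q * Dv (1,0,0) U1 q)) := by
    funext q
    obtain ⟨a, b, c⟩ := q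
    have h := h2 a b c
    rw [c21, d2, c3, c111, d11, c1, c_u1] at h
    show 3 * Dv (0,1,0) (Dv (1,0,0) U1) (a,b,c) + 3 * Dv (0,1,0) U2 (a,b,c)
        + (-2) * Dv (0,0,1) U1 (a,b,c)
      = 1 * Dv (1,0,0) (Dv (1,0,0) (Dv (1,0,0) U1)) (a,b,c)
          + 3 * Dv (1,0,0) (Dv (1,0,0) U2) (a,b,c)
          + (-6) * (U1 (a,b,c) * Dv (1,0,0) U1 (a,b,c))
    linarith
  have hE := congrFun (congrArg (Dv (1,0,0)) hfun2) (x,y,z)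
  have hEL : Dv (1,0,0) (fun q => 3 * Dv (0,1,0) (Dv (1,0,0) U1) q + 3 * Dv (0,1,0) U2 q
        + (-2) * Dv (0,0,1) U1 q) (x,y,z)
      = 3 * Dv (1,0,0) (Dv (0,1,0) (Dv (1,0,0) U1)) (x,y,z)
          + 3 * Dv (1,0,0) (Dv (0,1,0) U2) (x,y,z)
          + (-2) * Dv (1,0,0) (Dv (0,0,1) U1) (x,y,z) :=
    Dv_comb3 (Dv_diff (Dv_smooth hu1 (1,0,0)) (0,1,0)) (Dv_diff hu2 (0,1,0))
      (Dv_diff hu1 (0,0,1)) 3 3 (-2) (1,0,0) (x,y,z)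
  have hER : Dv (1,0,0) (fun q => 1 * Dv (1,0,0) (Dv (1,0,0) (Dv (1,0,0) U1)) q
          + 3 * Dv (1,0,0) (Dv (1,0,0) U2) q + (-6) * (U1 q * Dv (1,0,0) U1 q)) (x,y,z)
      = 1 * Dv (1,0,0) (Dv (1,0,0) (Dv (1,0,0) (Dv (1,0,0) U1))) (x,y,z)
          + 3 * Dv (1,0,0) (Dv (1,0,0) (Dv (1,0,0) U2)) (x,y,z)
          + (-6) * Dv (1,0,0) (fun q => U1 q * Dv (1,0,0) U1 q) (x,y,z) :=
    Dv_comb3 (Dv_diff (Dv_smooth (Dv_smooth hu1 (1,0,0)) (1,0,0)) (1,0,0))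
      (Dv_diff (Dv_smooth hu2 (1,0,0)) (1,0,0))
      (hU1d.mul (Dv_diff hu1 (1,0,0))) 1 3 (-6) (1,0,0) (x,y,z)
  have hprod : Dv (1,0,0) (fun q => U1 q * Dv (1,0,0) U1 q) (x,y,z)
      = U1 (x,y,z) * Dv (1,0,0) (Dv (1,0,0) U1) (x,y,z)
          + Dv (1,0,0) U1 (x,y,z) * Dv (1,0,0) U1 (x,y,z) :=
    Dv_mul_pt hU1d (Dv_diff hu1 (1,0,0)) (1,0,0) (x,y,z)
  -- commutation facts
  have hc12 : Dv (0,1,0) (Dv (1,0,0) U1) = Dv (1,0,0) (Dv (0,1,0) U1) :=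
    Dv_comm hu1 (0,1,0) (1,0,0)
  have hcA : Dv (1,0,0) (Dv (0,1,0) (Dv (1,0,0) U1)) (x,y,z)
      = Dv (1,0,0) (Dv (1,0,0) (Dv (0,1,0) U1)) (x,y,z) := by rw [hc12]
  have hcB : Dv (0,1,0) (Dv (1,0,0) (Dv (1,0,0) U1)) (x,y,z)
      = Dv (1,0,0) (Dv (1,0,0) (Dv (0,1,0) U1)) (x,y,z) := by
    rw [Dv_comm (Dv_smooth hu1 (1,0,0)) (0,1,0) (1,0,0), hc12]
  have hcC : Dv (1,0,0) (Dv (0,1,0) U2) (x,y,z) = Dv (0,1,0) (Dv (1,0,0) U2) (x,y,z) := by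
    rw [Dv_comm hu2 (1,0,0) (0,1,0)]
  -- W-reductions (function level)
  have hw1f : Dv (1,0,0) W = fun q => 2 * Dv (1,0,0) U1 q := by
    rw [hWdef]; exact Dv_const_mul hU1d 2 _
  have hw2f : Dv (0,1,0) W = fun q => 2 * Dv (0,1,0) U1 q := by
    rw [hWdef]; exact Dv_const_mul hU1d 2 _
  have hw3f : Dv (0,0,1) W = fun q => 2 * Dv (0,0,1) U1 q := by
    rw [hWdef]; exact Dv_const_mul hU1d 2 _
  have hw11f : Dv (1,0,0) (Dv (1,0,0) W) = fun q => 2 * Dv (1,0,0) (Dv (1,0,0) U1) q := by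
    rw [hw1f]; exact Dv_const_mul (Dv_diff hu1 (1,0,0)) 2 _
  have hw111f : Dv (1,0,0) (Dv (1,0,0) (Dv (1,0,0) W))
      = fun q => 2 * Dv (1,0,0) (Dv (1,0,0) (Dv (1,0,0) U1)) q := by
    rw [hw11f]; exact Dv_const_mul (Dv_diff (Dv_smooth hu1 (1,0,0)) (1,0,0)) 2 _
  -- goal LHS
  have hLHS : Dv (0,1,0) (Dv (0,1,0) W) (x,y,z) = 2 * Dv (0,1,0) (Dv (0,1,0) U1) (x,y,z) := by
    rw [hw2f]; exact congrFun (Dv_const_mul (Dv_diff hu1 (0,1,0)) 2 (0,1,0)) (x,y,z)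
  -- goal RHS conversion
  have hGs : ContDiff ℝ (⊤ : ℕ∞) (fun q => 4 * Dv (0,0,1) W q
      + (-1) * Dv (1,0,0) (Dv (1,0,0) (Dv (1,0,0) W)) q
      + (-6) * (W q * Dv (1,0,0) W q)) :=
    ((contDiff_const.mul (Dv_smooth hWs (0,0,1))).add
      (contDiff_const.mul (Dv_smooth (Dv_smooth (Dv_smooth hWs (1,0,0)) (1,0,0)) (1,0,0)))).add
      (contDiff_const.mul (hWs.mul (Dv_smooth hWs (1,0,0))))
  have hgG : ∀ a b c : ℝ,
      (4 * pd3 (fun a' b' c' => 2 * u1 a' b' c') a b c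
        - pd1 (pd1 (pd1 (fun a' b' c' => 2 * u1 a' b' c'))) a b c
        - 6 * (2 * u1 a b c) * pd1 (fun a' b' c' => 2 * u1 a' b' c') a b c)
      = (fun q => 4 * Dv (0,0,1) W q
          + (-1) * Dv (1,0,0) (Dv (1,0,0) (Dv (1,0,0) W)) q
          + (-6) * (W q * Dv (1,0,0) W q)) (a, b, c) := by
    intro a b c
    rw [w3, w111, w1, c_w]
    show 4 * Dv (0,0,1) W (a,b,c) - Dv (1,0,0) (Dv (1,0,0) (Dv (1,0,0) W)) (a,b,c)
        - 6 * W (a,b,c) * Dv (1,0,0) W (a,b,c)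
      = 4 * Dv (0,0,1) W (a,b,c) + (-1) * Dv (1,0,0) (Dv (1,0,0) (Dv (1,0,0) W)) (a,b,c)
          + (-6) * (W (a,b,c) * Dv (1,0,0) W (a,b,c))
    ring
  have cg : pd1 (fun a b c =>
        4 * pd3 (fun a' b' c' => 2 * u1 a' b' c') a b c
          - pd1 (pd1 (pd1 (fun a' b' c' => 2 * u1 a' b' c'))) a b c
          - 6 * (2 * u1 a b c) * pd1 (fun a' b' c' => 2 * u1 a' b' c') a b c) x y z
      = Dv (1,0,0) (fun q => 4 * Dv (0,0,1) W q
          + (-1) * Dv (1,0,0) (Dv (1,0,0) (Dv (1,0,0) W)) q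
          + (-6) * (W q * Dv (1,0,0) W q)) (x,y,z) :=
    pd1_eq (hGs.differentiable (by simp)) hgG x y z
  have hGexp : Dv (1,0,0) (fun q => 4 * Dv (0,0,1) W q
        + (-1) * Dv (1,0,0) (Dv (1,0,0) (Dv (1,0,0) W)) q
        + (-6) * (W q * Dv (1,0,0) W q)) (x,y,z)
      = 4 * Dv (1,0,0) (Dv (0,0,1) W) (x,y,z)
          + (-1) * Dv (1,0,0) (Dv (1,0,0) (Dv (1,0,0) (Dv (1,0,0) W))) (x,y,z)
          + (-6) * Dv (1,0,0) (fun q => W q * Dv (1,0,0) W q) (x,y,z) :=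
    Dv_comb3 (Dv_diff hWs (0,0,1))
      (Dv_diff (Dv_smooth (Dv_smooth hWs (1,0,0)) (1,0,0)) (1,0,0))
      (hWd.mul (Dv_diff hWs (1,0,0))) 4 (-1) (-6) (1,0,0) (x,y,z)
  have hpf : (fun q => W q * Dv (1,0,0) W q) = fun q => 4 * (U1 q * Dv (1,0,0) U1 q) := by
    funext q
    rw [congrFun hw1f q]
    simp only [hWdef]
    ring
  have hprodW : Dv (1,0,0) (fun q => W q * Dv (1,0,0) W q) (x,y,z)
      = 4 * Dv (1,0,0) (fun q => U1 q * Dv (1,0,0) U1 q) (x,y,z) := by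
    rw [hpf]
    exact congrFun (Dv_const_mul (hU1d.mul (Dv_diff hu1 (1,0,0))) 4 (1,0,0)) (x,y,z)
  have hw13 : Dv (1,0,0) (Dv (0,0,1) W) (x,y,z) = 2 * Dv (1,0,0) (Dv (0,0,1) U1) (x,y,z) := by
    rw [hw3f]; exact congrFun (Dv_const_mul (Dv_diff hu1 (0,0,1)) 2 (1,0,0)) (x,y,z)
  have hw1111 : Dv (1,0,0) (Dv (1,0,0) (Dv (1,0,0) (Dv (1,0,0) W))) (x,y,z)
      = 2 * Dv (1,0,0) (Dv (1,0,0) (Dv (1,0,0) (Dv (1,0,0) U1))) (x,y,z) := by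
    rw [hw111f]
    exact congrFun (Dv_const_mul
      (Dv_diff (Dv_smooth (Dv_smooth hu1 (1,0,0)) (1,0,0)) (1,0,0)) 2 (1,0,0)) (x,y,z)
  rw [w22, cg, hLHS, hGexp, hprodW, hw13, hw1111]
  rw [hEL, hER] at hE
  linarith [hE, hprod, k2, k3, hcA, hcB, hcC,
    Dv_mul_pt hU1d (Dv_diff hu1 (1,0,0)) ((1:ℝ),(0:ℝ),(0:ℝ)) ((x:ℝ),y,z)]
end
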